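/- arXiv:2001.08846 — 10 statements merged into one kernel-verified Lean document; each statement's English description precedes it below -/
import Mathlib

section
/- Let ≈ be a right-invariant equivalence relation on Σ* and let A ⊆ Σ* respect ≈. Then for every j ≥ 1, the cardinality of A^(j) is at most the cardinality of the quotient Σ*/≈ (the set of ≈-equivalence classes). -/
/-- Shortlex order on strings: first by length, then lexicographically. -/
def ShortlexLt {σ : Type*} [LinearOrder σ] (x y : List σ) : Prop :=
  x.length < y.length ∨ (x.length = y.length ∧ List.Lex (· < ·) x y)

/-- `y` is the `j`-th `A`-extension of `x`: `y ∈ A_x` and exactly `j - 1`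
elements of `A_x = {z | x ++ z ∈ A}` are shortlex-smaller than `y`. -/
def IsNthExt {σ : Type*} [LinearOrder σ] (A : Set (List σ)) (j : ℕ) (x y : List σ) : Prop :=
  x ++ y ∈ A ∧ {z | x ++ z ∈ A ∧ ShortlexLt z y}.encard = ((j - 1 : ℕ) : ℕ∞)

/-- `A^(j)`: the set of all `j`-th `A`-extensions. -/
def ExtSet {σ : Type*} [LinearOrder σ] (A : Set (List σ)) (j : ℕ) : Set (List σ) :=
  {y | ∃ x, IsNthExt A j x y}

/-! In a strictly totally ordered set, an element of `S` is determined by the number of elements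
of `S` below it; so the `j`-th extension of `x` is a partial function of the residual language
`A_x`, which in turn depends only on the `≈`-class of `x`. Hence `A^(j)` is the image of a partial
map defined on `Σ*/≈`. -/

section RankInStrictTotalOrder

variable {α : Type*} {lt : α → α → Prop} {S : Set α} {a b : α}

theorem encard_setOf_rel_lt_of_rel [IsStrictOrder α lt] (ha : a ∈ S) (hab : lt a b)
    (hfin : {z | z ∈ S ∧ lt z a}.Finite) :
    {z | z ∈ S ∧ lt z a}.encard < {z | z ∈ S ∧ lt z b}.encard := by
  refine hfin.encard_lt_encard (Set.ssubset_iff_of_subset ?_ |>.2 ⟨a, ⟨ha, hab⟩, ?_⟩)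
  · exact fun z hz => ⟨hz.1, trans_of lt hz.2 hab⟩
  · exact fun h => irrefl_of lt a h.2

theorem eq_of_encard_setOf_rel_eq [IsStrictTotalOrder α lt] (ha : a ∈ S) (hb : b ∈ S) {n : ℕ}
    (hna : {z | z ∈ S ∧ lt z a}.encard = n) (hnb : {z | z ∈ S ∧ lt z b}.encard = n) :
    a = b := by
  rcases trichotomous_of lt a b with hab | hab | hba
  · have := encard_setOf_rel_lt_of_rel ha hab (Set.finite_of_encard_eq_coe hna)
    rw [hna, hnb] at this
    exact absurd this (lt_irrefl _)
  · exact hab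
  · have := encard_setOf_rel_lt_of_rel hb hba (Set.finite_of_encard_eq_coe hnb)
    rw [hna, hnb] at this
    exact absurd this (lt_irrefl _)

end RankInStrictTotalOrder

section Shortlex

variable {σ : Type*} [LinearOrder σ]

theorem shortlexLt_irrefl (x : List σ) : ¬ ShortlexLt x x := by
  rintro (h | ⟨-, h⟩)
  · exact lt_irrefl _ h
  · exact irrefl_of (List.Lex (· < ·)) x h

theorem ShortlexLt.trans {x y z : List σ} (hxy : ShortlexLt x y) (hyz : ShortlexLt y z) :
    ShortlexLt x z := by
  rcases hxy with hxy | ⟨exy, lxy⟩ <;> rcases hyz with hyz | ⟨eyz, lyz⟩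
  · exact Or.inl (hxy.trans hyz)
  · exact Or.inl (eyz ▸ hxy)
  · exact Or.inl (exy ▸ hyz)
  · exact Or.inr ⟨exy.trans eyz, List.lex_trans (fun h1 h2 => lt_trans h1 h2) lxy lyz⟩

theorem shortlexLt_trichotomous (x y : List σ) : ShortlexLt x y ∨ x = y ∨ ShortlexLt y x := by
  rcases lt_trichotomy x.length y.length with h | h | h
  · exact Or.inl (Or.inl h)
  · rcases trichotomous_of (List.Lex ((· < ·) : σ → σ → Prop)) x y with l | l | l
    · exact Or.inl (Or.inr ⟨h, l⟩)
    · exact Or.inr (Or.inl l)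
    · exact Or.inr (Or.inr (Or.inr ⟨h.symm, l⟩))
  · exact Or.inr (Or.inr (Or.inl h))

instance : IsStrictTotalOrder (List σ) ShortlexLt where
  irrefl := shortlexLt_irrefl
  trans _ _ _ := ShortlexLt.trans
  trichotomous x y hxy hyx := by
    simpa [hxy, hyx] using shortlexLt_trichotomous x y

end Shortlex

section Extensions

variable {σ : Type*} [LinearOrder σ] {A : Set (List σ)} {j : ℕ} {x x' y y' : List σ}

theorem IsNthExt.unique (hy : IsNthExt A j x y) (hy' : IsNthExt A j x y') : y = y' :=
  eq_of_encard_setOf_rel_eq (S := {z | x ++ z ∈ A}) hy.1 hy'.1 hy.2 hy'.2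

theorem isNthExt_congr (hres : ∀ z, x ++ z ∈ A ↔ x' ++ z ∈ A) :
    IsNthExt A j x y ↔ IsNthExt A j x' y := by
  simp only [IsNthExt, hres]

end Extensions

theorem stmt0_general {σ : Type*} [LinearOrder σ]
    (r : Setoid (List σ))
    (hri : ∀ x y z : List σ, r.r x y → r.r (x ++ z) (y ++ z))
    (A : Set (List σ))
    (hresp : ∀ x y : List σ, r.r x y → (x ∈ A ↔ y ∈ A))
    (j : ℕ) :
    Cardinal.mk (ExtSet A j) ≤ Cardinal.mk (Quotient r) := by
  choose prefixOf hprefixOf using fun y : ExtSet A j => y.2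
  refine Cardinal.mk_le_of_injective (f := fun y => Quotient.mk r (prefixOf y)) fun y y' h => ?_
  have hres : ∀ z, prefixOf y ++ z ∈ A ↔ prefixOf y' ++ z ∈ A :=
    fun z => hresp _ _ (hri _ _ z (Quotient.exact h))
  exact Subtype.ext ((hprefixOf y).unique ((isNthExt_congr hres).2 (hprefixOf y')))

/-- If `≈` is a right-invariant equivalence relation on `Σ*` respected by `A`,
then for every `j ≥ 1`, `|A^(j)| ≤ |Σ*/≈|`. -/
theorem stmt0 {σ : Type*} [Fintype σ] [Nonempty σ] [LinearOrder σ]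
    (r : Setoid (List σ))
    (hri : ∀ x y z : List σ, r.r x y → r.r (x ++ z) (y ++ z))
    (A : Set (List σ))
    (hresp : ∀ x y : List σ, r.r x y → (x ∈ A ↔ y ∈ A))
    (j : ℕ) (hj : 1 ≤ j) :
    Cardinal.mk (ExtSet A j) ≤ Cardinal.mk (Quotient r) :=
  stmt0_general r hri A hresp j
end

section
/- Let I ⊆ ℕ be infinite and suppose GAPS_I is infinite. Then the language B_I = {0^n : n ∈ I} over the one-letter alphabet {0} has no infinite regular subset; that is, every infinite language A ⊆ B_I is not regular. -/
/-!
Pumping a long word of an infinite regular `A ⊆ B_I` shows that the lengths `n₀ + q k` (`k ∈ ℕ`,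
`q ≥ 1`) all lie in `I`. Every `n` then has an element of `I` in `(n, n + n₀ + q]`, so all gaps of
`I` are at most `n₀ + q`, contradicting the infinitude of `GAPS_I`.
-/

theorem Language.IsRegular.exists_pumping_of_infinite {α : Type*} [Finite α] {L : Language α}
    (hL : L.IsRegular) (hinf : Set.Infinite (L : Set (List α))) :
    ∃ a b c : List α, b ≠ [] ∧ ∀ k, a ++ (List.replicate k b).flatten ++ c ∈ L := by
  obtain ⟨σ, _, M, rfl⟩ := hL
  obtain ⟨x, hx, hlong⟩ := (hinf.sdiff (List.finite_length_lt α (Fintype.card σ))).nonempty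
  obtain ⟨a, b, c, -, -, hb, hpump⟩ := M.pumping_lemma hx (not_lt.mp hlong)
  refine ⟨a, b, c, hb, fun k => hpump ?_⟩
  refine Language.append_mem_mul (Language.append_mem_mul rfl ?_) rfl
  exact Language.join_mem_kstar fun y hy => List.eq_of_mem_replicate hy

/-- The paper's `GAPS_S`; the hypothesis `hgaps` of `stmt4` unfolds to `(Nat.gaps I).Infinite`. -/
def Nat.gaps (S : Set ℕ) : Set ℕ :=
  {d | ∃ n ∈ S, ∃ m ∈ S, n < m ∧ (∀ k ∈ S, n < k → m ≤ k) ∧ d = m - n}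

theorem Nat.gaps_finite_of_forall_add_mul_mem {S : Set ℕ} {n₀ q : ℕ} (hq : 0 < q)
    (hS : ∀ k, n₀ + q * k ∈ S) : (Nat.gaps S).Finite := by
  refine (Set.finite_Iic (n₀ + q)).subset ?_
  rintro d ⟨n, -, m, -, -, hmin, rfl⟩
  have hgt : n < q * (n / q + 1) := Nat.lt_mul_div_succ n hq
  have hle : q * (n / q + 1) ≤ n + q := by
    rw [mul_add, mul_one]
    exact Nat.add_le_add_right (Nat.mul_div_le n q) q
  have := hmin _ (hS (n / q + 1)) (by omega)
  simp only [Set.mem_Iic]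
  omega

theorem stmt4_general (I : Set ℕ)
    (hgaps : {d : ℕ | ∃ n ∈ I, ∃ m ∈ I, n < m ∧ (∀ k ∈ I, n < k → m ≤ k) ∧ d = m - n}.Infinite)
    (A : Set (List (Fin 1)))
    (hsub : A ⊆ {w | ∃ n ∈ I, w = List.replicate n 0})
    (hinf : A.Infinite) :
    ¬ Language.IsRegular A := by
  intro hreg
  obtain ⟨a, b, c, hb, hpump⟩ := hreg.exists_pumping_of_infinite hinf
  have hlengths : ∀ k, (a.length + c.length) + b.length * k ∈ I := by
    intro k
    obtain ⟨n, hn, hw⟩ := hsub (hpump k)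
    have hlen := congrArg List.length hw
    simp only [List.length_append, List.length_flatten, List.map_replicate, List.sum_replicate,
      List.length_replicate, smul_eq_mul] at hlen
    rwa [← hlen, add_right_comm, mul_comm] at hn
  exact hgaps (Nat.gaps_finite_of_forall_add_mul_mem (List.length_pos_iff.mpr hb) hlengths)

/-- If `I ⊆ ℕ` is infinite and `GAPS_I = {n^I - n : n ∈ I}` is infinite
(where `n^I` is the least element of `I` greater than `n`), then
`B_I = {0^n : n ∈ I}` has no infinite regular subset. -/
theorem stmt4 (I : Set ℕ) (hI : I.Infinite)
    (hgaps : {d : ℕ | ∃ n ∈ I, ∃ m ∈ I, n < m ∧ (∀ k ∈ I, n < k → m ≤ k) ∧ d = m - n}.Infinite)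
    (A : Set (List (Fin 1)))
    (hsub : A ⊆ {w | ∃ n ∈ I, w = List.replicate n 0})
    (hinf : A.Infinite) :
    ¬ Language.IsRegular A :=
  stmt4_general I hgaps A hsub hinf
end

section
/- The language B = {0^p : p is prime} over the one-letter alphabet {0} has no infinite regular subset; that is, every infinite language A ⊆ B is not regular. -/
/-!
Pumping a word `0^p` of a regular subset of the primes, with `p` beyond the pumping length, by a
loop of length `d` a further `p` times yields the word `0^(p + p * d) = 0^(p * (1 + d))`, whose
length is composite.
-/

namespace Language

variable {α : Type*} {L : Language α}

theorem IsRegular.exists_forall_length_add_mul_mem (h : L.IsRegular) :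
    ∃ N, ∀ w ∈ L, N ≤ w.length →
      ∃ d, 0 < d ∧ ∀ k : ℕ, w.length + k * d ∈ List.length '' (L : Set (List α)) := by
  obtain ⟨σ, _, M, rfl⟩ := h
  refine ⟨Fintype.card σ, fun w hw hN => ?_⟩
  obtain ⟨a, b, c, rfl, -, hb, hpump⟩ := M.pumping_lemma hw hN
  refine ⟨b.length, List.length_pos_iff.mpr hb, fun k =>
    ⟨a ++ (List.replicate (k + 1) b).flatten ++ c, hpump ?_, ?_⟩⟩
  · exact mem_mul.2 ⟨_, mem_mul.2 ⟨a, rfl, _,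
      mem_kstar.2 ⟨_, rfl, fun _ hy => List.eq_of_mem_replicate hy⟩, rfl⟩, c, rfl, rfl⟩
  · simp only [List.length_append, List.length_flatten, List.map_replicate, List.sum_replicate,
      smul_eq_mul]
    ring

end Language

theorem Set.Infinite.exists_mem_le_length {α : Type*} [Finite α] {S : Set (List α)}
    (hS : S.Infinite) (n : ℕ) : ∃ w ∈ S, n ≤ w.length := by
  by_contra! hlt
  exact hS ((List.finite_length_lt α n).subset hlt)

/-- The language `B = {0^p : p prime}` over the one-letter alphabet `{0}` has
no infinite regular subset. -/
theorem stmt5 (A : Set (List (Fin 1)))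
    (hsub : A ⊆ {w | ∃ p : ℕ, p.Prime ∧ w = List.replicate p 0})
    (hinf : A.Infinite) :
    ¬ Language.IsRegular A := by
  intro hreg
  obtain ⟨N, hpump⟩ := hreg.exists_forall_length_add_mul_mem
  obtain ⟨w, hwA, hNw⟩ := hinf.exists_mem_le_length N
  obtain ⟨d, hd, hlen⟩ := hpump w hwA hNw
  obtain ⟨p, hp, rfl⟩ := hsub hwA
  obtain ⟨v, hvA, hv⟩ := hlen p
  obtain ⟨q, hq, rfl⟩ := hsub hvA
  rw [List.length_replicate, List.length_replicate] at hv
  have hq_eq : q = p * (1 + d) := by rw [hv]; ring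
  exact Nat.not_prime_mul hp.ne_one (by omega) (hq_eq ▸ hq)
end

section
/- The language A = {0^m 1^n : m, n ≥ 1 and gcd(m, n) = 1} over the alphabet {0,1} is not regular. -/
/-!
By Myhill–Nerode it suffices to exhibit infinitely many words with pairwise distinct left
quotients. The words `0^p`, `p` prime, will do: for primes `p ≠ q` the suffix `1^q` completes
`0^p` to a word of the language, but not `0^q`, since `gcd(q, q) = q ≠ 1`.
-/

theorem Language.not_isRegular_of_injOn_leftQuotient {α ι : Type*} {L : Language α} {S : Set ι}
    (hS : S.Infinite) {f : ι → List α} (hf : S.InjOn (L.leftQuotient ∘ f)) : ¬ L.IsRegular :=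
  fun hL => (hS.image hf).not_finite <| hL.finite_range_leftQuotient.subset <|
    (Set.image_subset_range _ _).trans (Set.range_comp_subset_range _ _)

theorem List.replicate_append_replicate_inj {α : Type*} [DecidableEq α] {a b : α} (hab : a ≠ b)
    {m n m' n' : ℕ} :
    replicate m a ++ replicate n b = replicate m' a ++ replicate n' b ↔ m = m' ∧ n = n' := by
  refine ⟨fun h => ⟨?_, ?_⟩, fun ⟨hm, hn⟩ => hm ▸ hn ▸ rfl⟩
  · simpa [count_replicate, hab.symm] using congrArg (count a) h
  · simpa [count_replicate, hab] using congrArg (count b) h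

def coprimeBlocks : Language (Fin 2) :=
  {w | ∃ m n : ℕ, 1 ≤ m ∧ 1 ≤ n ∧ Nat.gcd m n = 1 ∧ w = List.replicate m 0 ++ List.replicate n 1}

theorem replicate_append_replicate_mem_coprimeBlocks_iff {m n : ℕ} :
    List.replicate m 0 ++ List.replicate n 1 ∈ coprimeBlocks ↔
      1 ≤ m ∧ 1 ≤ n ∧ Nat.gcd m n = 1 := by
  constructor
  · rintro ⟨m', n', hm', hn', hgcd, h⟩
    obtain ⟨rfl, rfl⟩ := (List.replicate_append_replicate_inj (by decide)).1 h
    exact ⟨hm', hn', hgcd⟩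
  · rintro ⟨hm, hn, hgcd⟩
    exact ⟨m, n, hm, hn, hgcd, rfl⟩

theorem leftQuotient_coprimeBlocks_injOn_primes :
    {p : ℕ | p.Prime}.InjOn (coprimeBlocks.leftQuotient ∘ fun p => List.replicate p 0) := by
  intro p hp q hq hpq
  simp only [Function.comp_apply] at hpq
  by_contra hne
  have hp_mem : List.replicate q 1 ∈ coprimeBlocks.leftQuotient (List.replicate p 0) :=
    replicate_append_replicate_mem_coprimeBlocks_iff.2
      ⟨hp.one_le, hq.one_le, (Nat.coprime_primes hp hq).2 hne⟩
  have hq_not_mem : List.replicate q 1 ∉ coprimeBlocks.leftQuotient (List.replicate q 0) :=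
    fun h => hq.ne_one ((Nat.gcd_self q).symm.trans
      (replicate_append_replicate_mem_coprimeBlocks_iff.1 h).2.2)
  exact hq_not_mem (hpq ▸ hp_mem)

/-- The language `A = {0^m 1^n : m, n ≥ 1 and gcd(m,n) = 1}` is not regular. -/
theorem stmt7 :
    ¬ Language.IsRegular
      {w : List (Fin 2) | ∃ m n : ℕ, 1 ≤ m ∧ 1 ≤ n ∧ Nat.gcd m n = 1 ∧
        w = List.replicate m 0 ++ List.replicate n 1} :=
  Language.not_isRegular_of_injOn_leftQuotient Nat.infinite_setOfPred_prime
    leftQuotient_coprimeBlocks_injOn_primes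
end

section
/- For every set I ⊆ ℕ and every j ≥ 1, the language A[I] satisfies |A[I]^(j)| ≤ 3. -/
/-- `I' = {3i : i ∈ ℕ} ∪ {3i+1 : i ∈ I} ∪ {3i+2 : i ∈ ℕ \\ I}`. -/
def Iext (I : Set ℕ) : Set ℕ :=
  {k | (∃ i : ℕ, k = 3 * i) ∨ (∃ i ∈ I, k = 3 * i + 1) ∨ (∃ i : ℕ, i ∉ I ∧ k = 3 * i + 2)}

/-- The language `A[I] = {0^n : n ∈ I'}` of Construction 4.1. -/
def AofI (I : Set ℕ) : Set (List (Fin 1)) :=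
  {w | ∃ n ∈ Iext I, w = List.replicate n 0}

open scoped Classical

theorem List.Lex.length_ne_of_subsingleton {σ : Type*} [Preorder σ] [Subsingleton σ]
    {x y : List σ} (h : List.Lex (· < ·) x y) : x.length ≠ y.length := by
  induction h with
  | nil => simp
  | cons _ ih => simpa using ih
  | rel h => exact (h.ne (Subsingleton.elim _ _)).elim

theorem shortlexLt_iff_length_lt {σ : Type*} [LinearOrder σ] [Subsingleton σ] (x y : List σ) :
    ShortlexLt x y ↔ x.length < y.length :=
  ⟨fun h => h.elim id fun ⟨hlen, hlex⟩ => absurd hlen hlex.length_ne_of_subsingleton, Or.inl⟩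

theorem eq_replicate_length_zero (w : List (Fin 1)) : w = List.replicate w.length 0 :=
  List.eq_replicate_length.2 fun b _ => Subsingleton.elim b 0

theorem Set.encard_setOf_lt_and_eq_count (p : ℕ → Prop) (n : ℕ) :
    {k | k < n ∧ p k}.encard = Nat.count p n := by
  rw [Nat.count_eq_card_filter_range, ← Set.encard_coe_eq_coe_finsetCard]
  congr 1
  ext k
  simp

theorem Nat.exists_eq_three_mul_add (N : ℕ) :
    ∃ q, N = 3 * q ∨ N = 3 * q + 1 ∨ N = 3 * q + 2 :=
  ⟨N / 3, by omega⟩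

namespace Iext

variable (I : Set ℕ)

theorem three_mul_mem (q : ℕ) : 3 * q ∈ Iext I :=
  Or.inl ⟨q, rfl⟩

theorem three_mul_add_one_mem_iff (q : ℕ) : 3 * q + 1 ∈ Iext I ↔ q ∈ I := by
  constructor
  · rintro (⟨i, hi⟩ | ⟨i, hiI, hi⟩ | ⟨i, -, hi⟩)
    · omega
    · rwa [show q = i by omega]
    · omega
  · exact fun hq => Or.inr (Or.inl ⟨q, hq, rfl⟩)

theorem three_mul_add_two_mem_iff (q : ℕ) : 3 * q + 2 ∈ Iext I ↔ q ∉ I := by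
  constructor
  · rintro (⟨i, hi⟩ | ⟨i, -, hi⟩ | ⟨i, hiI, hi⟩)
    · omega
    · omega
    · rwa [show q = i by omega]
  · exact fun hq => Or.inr (Or.inr ⟨q, hq, rfl⟩)

theorem count_three_mul (q : ℕ) : Nat.count (· ∈ Iext I) (3 * q) = 2 * q := by
  induction q with
  | zero => simp
  | succ q ih =>
    rw [show 3 * (q + 1) = 3 * q + 2 + 1 by ring, Nat.count_succ, Nat.count_succ, Nat.count_succ,
      ih, if_pos (three_mul_mem I q)]
    simp only [three_mul_add_one_mem_iff, three_mul_add_two_mem_iff]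
    split_ifs <;> omega

theorem count_three_mul_add_one (q : ℕ) :
    Nat.count (· ∈ Iext I) (3 * q + 1) = 2 * q + 1 := by
  rw [Nat.count_succ, count_three_mul, if_pos (three_mul_mem I q)]

theorem count_three_mul_add_two (q : ℕ) :
    Nat.count (· ∈ Iext I) (3 * q + 2) = 2 * q + 1 + if q ∈ I then 1 else 0 := by
  rw [Nat.count_succ, count_three_mul_add_one]
  simp only [three_mul_add_one_mem_iff]

theorem two_mul_le_three_mul_count (N : ℕ) :
    2 * N ≤ 3 * Nat.count (· ∈ Iext I) N + 1 := by
  obtain ⟨q, rfl | rfl | rfl⟩ := Nat.exists_eq_three_mul_add N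
  · rw [count_three_mul]; omega
  · rw [count_three_mul_add_one]; omega
  · rw [count_three_mul_add_two]; split_ifs <;> omega

theorem three_mul_count_le (N : ℕ) :
    3 * Nat.count (· ∈ Iext I) N ≤ 2 * N + 2 := by
  obtain ⟨q, rfl | rfl | rfl⟩ := Nat.exists_eq_three_mul_add N
  · rw [count_three_mul]; omega
  · rw [count_three_mul_add_one]; omega
  · rw [count_three_mul_add_two]; split_ifs <;> omega

theorem three_mul_count_le_of_mem {N : ℕ} (hN : N ∈ Iext I) :
    3 * Nat.count (· ∈ Iext I) N ≤ 2 * N + 1 := by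
  obtain ⟨q, rfl | rfl | rfl⟩ := Nat.exists_eq_three_mul_add N
  · rw [count_three_mul]; omega
  · rw [count_three_mul_add_one]; omega
  · rw [count_three_mul_add_two, if_neg ((three_mul_add_two_mem_iff I q).1 hN)]; omega

end Iext

theorem mem_AofI_iff (I : Set ℕ) (w : List (Fin 1)) : w ∈ AofI I ↔ w.length ∈ Iext I :=
  ⟨by rintro ⟨n, hn, rfl⟩; simpa using hn, fun h => ⟨w.length, h, eq_replicate_length_zero w⟩⟩

theorem encard_shortlexLt_extensions_AofI (I : Set ℕ) (x y : List (Fin 1)) :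
    {z | x ++ z ∈ AofI I ∧ ShortlexLt z y}.encard =
      Nat.count (fun k => x.length + k ∈ Iext I) y.length := by
  have himage : {z | x ++ z ∈ AofI I ∧ ShortlexLt z y} =
      (List.replicate · 0) '' {k | k < y.length ∧ x.length + k ∈ Iext I} := by
    ext z
    simp only [Set.mem_ofPred_eq, Set.mem_image, mem_AofI_iff, shortlexLt_iff_length_lt,
      List.length_append]
    constructor
    · rintro ⟨hz, hlt⟩
      exact ⟨z.length, ⟨hlt, hz⟩, (eq_replicate_length_zero z).symm⟩
    · rintro ⟨k, ⟨hlt, hk⟩, rfl⟩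
      simpa using ⟨hk, hlt⟩
  rw [himage, (List.replicate_left_injective 0).encard_image,
    Set.encard_setOf_lt_and_eq_count]

theorem length_window_of_mem_ExtSet_AofI {I : Set ℕ} {j : ℕ} {y : List (Fin 1)}
    (hy : y ∈ ExtSet (AofI I) j) :
    3 * (j - 1) ≤ 2 * y.length + 2 ∧ 2 * y.length ≤ 3 * (j - 1) + 3 := by
  obtain ⟨x, hmem, hcard⟩ := hy
  rw [encard_shortlexLt_extensions_AofI, Nat.cast_inj] at hcard
  rw [mem_AofI_iff, List.length_append] at hmem
  have hcount := Nat.count_add (· ∈ Iext I) x.length y.length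
  have hlow := Iext.two_mul_le_three_mul_count I x.length
  have hhigh := Iext.three_mul_count_le I x.length
  have hlow' := Iext.two_mul_le_three_mul_count I (x.length + y.length)
  have hhigh' := Iext.three_mul_count_le_of_mem I hmem
  omega

theorem stmt8_general (I : Set ℕ) (j : ℕ) :
    (ExtSet (AofI I) j).encard ≤ 3 := by
  set a := (3 * (j - 1) - 1) / 2
  have hsub : ExtSet (AofI I) j ⊆ (List.replicate · 0) '' ↑(Finset.Icc a (a + 2)) := by
    intro y hy
    have := length_window_of_mem_ExtSet_AofI hy
    exact ⟨y.length, by simp only [Finset.coe_Icc, Set.mem_Icc]; omega,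
      (eq_replicate_length_zero y).symm⟩
  calc (ExtSet (AofI I) j).encard
      ≤ (↑(Finset.Icc a (a + 2)) : Set ℕ).encard :=
        (Set.encard_mono hsub).trans (Set.encard_image_le _ _)
    _ = 3 := by
      rw [Set.encard_coe_eq_coe_finsetCard, Nat.card_Icc, show a + 2 + 1 - a = 3 by omega]; rfl

/-- For every `I ⊆ ℕ` and every `j ≥ 1`, `|A[I]^(j)| ≤ 3`. -/
theorem stmt8 (I : Set ℕ) (j : ℕ) (hj : 1 ≤ j) :
    (ExtSet (AofI I) j).encard ≤ 3 :=
  stmt8_general I j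
end

section
/- Let A ⊆ Σ* and j ≥ 1. If UE(A) has at least j elements, then A^(j) is finite. -/
/-- `UE(A)`: the set of universal `A`-extensions. -/
def UE {σ : Type*} (A : Set (List σ)) : Set (List σ) :=
  {y | ∀ x : List σ, x ++ y ∈ A}

section

variable {σ : Type*} [LinearOrder σ]

theorem shortlexLt_of_length_lt {x y : List σ} (h : x.length < y.length) : ShortlexLt x y :=
  Or.inl h

theorem IsNthExt.encard_UE_shorter_lt {A : Set (List σ)} {j : ℕ} {x y : List σ}
    (hj : 1 ≤ j) (hy : IsNthExt A j x y) :
    {z ∈ UE A | z.length < y.length}.encard < j := by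
  have hsub : {z ∈ UE A | z.length < y.length} ⊆ {z | x ++ z ∈ A ∧ ShortlexLt z y} :=
    fun z ⟨hz, hlen⟩ => ⟨hz x, shortlexLt_of_length_lt hlen⟩
  calc {z ∈ UE A | z.length < y.length}.encard
      ≤ {z | x ++ z ∈ A ∧ ShortlexLt z y}.encard := Set.encard_mono hsub
    _ = ((j - 1 : ℕ) : ℕ∞) := hy.2
    _ < j := Nat.cast_lt.mpr (by omega)

end

theorem stmt12_general {σ : Type*} [Fintype σ] [LinearOrder σ]
    (A : Set (List σ)) (j : ℕ) (hj : 1 ≤ j)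
    (h : (j : ℕ∞) ≤ (UE A).encard) :
    (ExtSet A j).Finite := by
  obtain ⟨t, htUE, htj⟩ := Set.exists_subset_encard_eq h
  obtain ⟨M, hM⟩ := ((Set.finite_of_encard_eq_coe htj).image List.length).bddAbove
  refine (List.finite_length_le σ M).subset fun y ⟨x, hy⟩ => ?_
  rw [Set.mem_ofPred_eq]
  by_contra! hlen
  have ht : t ⊆ {z ∈ UE A | z.length < y.length} :=
    fun z hz => ⟨htUE hz, (hM ⟨z, hz, rfl⟩).trans_lt hlen⟩
  exact (Set.encard_mono ht).not_gt (htj ▸ hy.encard_UE_shorter_lt hj)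

/-- If `UE(A)` has at least `j` elements, then `A^(j)` is finite. -/
theorem stmt12 {σ : Type*} [Fintype σ] [Nonempty σ] [LinearOrder σ]
    (A : Set (List σ)) (j : ℕ) (hj : 1 ≤ j)
    (h : (j : ℕ∞) ≤ (UE A).encard) :
    (ExtSet A j).Finite :=
  stmt12_general A j hj h
end

section
/- The Kamae–Weiss language A = {u 1 1 0^n 1 0^n : u ∈ {0,1}* and n ≥ 1} does not have infinite ordinal extensions; that is, A^(j) is finite for every j ≥ 1. -/
/-!
Whatever the prefix `x`, the strings `0^k 11010` (`k ≥ 0`) lie in `A_x`, one of every length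
`≥ 5`. So a `j`-th extension `y` of `x` has at least `|y| - 5` strictly shorter extensions below
it, forcing `|y| ≤ j + 4`; hence `A^(j)` consists of strings of bounded length over a finite
alphabet.
-/

theorem IsNthExt.length_le {σ : Type*} [LinearOrder σ] {A : Set (List σ)} {j m : ℕ}
    {x y : List σ} (hA : ∀ L, m ≤ L → ∃ z : List σ, z.length = L ∧ x ++ z ∈ A)
    (hy : IsNthExt A j x y) : y.length ≤ m + (j - 1) := by
  set below := {z | x ++ z ∈ A ∧ ShortlexLt z y}
  have hlengths : Set.Ico m y.length ⊆ List.length '' below := by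
    rintro L ⟨hmL, hLy⟩
    obtain ⟨z, rfl, hz⟩ := hA L hmL
    exact ⟨z, ⟨hz, Or.inl hLy⟩, rfl⟩
  have hcard : ((y.length - m : ℕ) : ℕ∞) ≤ ((j - 1 : ℕ) : ℕ∞) :=
    calc ((y.length - m : ℕ) : ℕ∞) = (Set.Ico m y.length).encard := by
          rw [← Finset.coe_Ico, Set.encard_coe_eq_coe_finsetCard, Nat.card_Ico]
      _ ≤ (List.length '' below).encard := Set.encard_le_encard hlengths
      _ ≤ below.encard := Set.encard_image_le _ _
      _ = ((j - 1 : ℕ) : ℕ∞) := hy.2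
  have := ENat.natCast_le_natCast.mp hcard
  omega

theorem ExtSet.finite_of_exists_length {σ : Type*} [LinearOrder σ] [Finite σ]
    {A : Set (List σ)} (m j : ℕ)
    (hA : ∀ x L, m ≤ L → ∃ z : List σ, z.length = L ∧ x ++ z ∈ A) :
    (ExtSet A j).Finite :=
  (List.finite_length_le σ (m + (j - 1))).subset fun _ ⟨x, hy⟩ => hy.length_le (hA x)

/-- The Kamae–Weiss language `A = {u 1 1 0^n 1 0^n : u ∈ {0,1}*, n ≥ 1}` does
not have infinite ordinal extensions. -/
theorem stmt14 :
    ∀ j : ℕ, 1 ≤ j →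
      (ExtSet {w : List (Fin 2) | ∃ u : List (Fin 2), ∃ n : ℕ, 1 ≤ n ∧
        w = u ++ [1, 1] ++ List.replicate n 0 ++ [1] ++ List.replicate n 0} j).Finite := by
  intro j _
  refine ExtSet.finite_of_exists_length 5 j fun x L hL => ?_
  refine ⟨List.replicate (L - 5) 0 ++ [1, 1, 0, 1, 0], by simp [Nat.sub_add_cancel hL], ?_⟩
  exact ⟨x ++ List.replicate (L - 5) 0, 1, le_rfl, by simp⟩
end

section
/- For all j ≥ 1, B_0^j · {0^3} = B_0^{j+2} and B_1^j · {0^3} = B_1^{j+2}; and for all j ≥ 2, B_2^j · {0^3} = B_2^{j+2}. -/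
/-- The languages `B_0^j` of Construction 4.4 (over the one-letter alphabet). -/
def B0 : ℕ → Language (Fin 1)
  | 0 => 0
  | 1 => {[]}
  | (n + 2) => if (n + 2) % 2 = 0 then B0 (n + 1) * {[0], [0, 0]} else B0 n * {[0, 0, 0]}

/-- The languages `B_1^j` of Construction 4.4 (over the one-letter alphabet). -/
def B1 : ℕ → Language (Fin 1)
  | 0 => 0
  | 1 => {[], [0]}
  | 2 => {[0, 0]}
  | (n + 3) => if (n + 3) % 2 = 0 then B1 (n + 1) * {[0, 0, 0]} else B1 (n + 2) * {[0], [0, 0]}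

/-- The languages `B_2^j` of Construction 4.4 (over the one-letter alphabet). -/
def B2 : ℕ → Language (Fin 1)
  | 0 => 0
  | 1 => {[], [0]}
  | 2 => {[0], [0, 0], [0, 0, 0]}
  | (n + 3) => if (n + 3) % 2 = 0 then B2 (n + 2) * {[0, 0]} else B2 (n + 2) * {[0]}

/-!
Over a one-letter alphabet concatenation of languages is commutative, since a word is determined
by its length. Hence the factor `{0³}` can be moved past the last factor `{0, 0²}` in the
recursions for `B_0` and `B_1`; for `B_2`, two consecutive steps append `0` and `0²` in some
order, i.e. exactly `0³`. The only base case left is `B_1^1 · {0³} = {0³, 0⁴} = B_1^3`.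
-/

namespace Language

variable {α : Type*}

theorem singleton_mul_singleton (a b : List α) : ({a} : Language α) * {b} = {a ++ b} :=
  Set.image2_singleton

theorem insert_eq (a : List α) (l : Language α) : (insert a l : Language α) = {a} + l :=
  Set.insert_eq a l

theorem append_comm_of_subsingleton [Subsingleton α] (a b : List α) : a ++ b = b ++ a :=
  List.ext_get (by simp [Nat.add_comm]) fun _ _ _ => Subsingleton.elim _ _

theorem mul_comm_of_subsingleton [Subsingleton α] (l m : Language α) : l * m = m * l := by
  ext x
  simp only [mem_mul]
  constructor <;>
    exact fun ⟨a, ha, b, hb, hx⟩ => ⟨b, hb, a, ha, append_comm_of_subsingleton b a ▸ hx⟩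

instance [Subsingleton α] : CommSemiring (Language α) where
  mul_comm := mul_comm_of_subsingleton

end Language

open Language

theorem B0_two_mul_add_two (k : ℕ) : B0 (2 * k + 2) = B0 (2 * k + 1) * {[0], [0, 0]} := by
  rw [B0.eq_3, if_pos (by omega)]

theorem B0_two_mul_add_three (k : ℕ) : B0 (2 * k + 3) = B0 (2 * k + 1) * {[0, 0, 0]} := by
  rw [B0.eq_3 (2 * k + 1), if_neg (by omega)]

theorem B1_two_mul_add_three (k : ℕ) : B1 (2 * k + 3) = B1 (2 * k + 2) * {[0], [0, 0]} := by
  rw [B1.eq_4, if_neg (by omega)]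

theorem B1_two_mul_add_four (k : ℕ) : B1 (2 * k + 4) = B1 (2 * k + 2) * {[0, 0, 0]} := by
  rw [B1.eq_4 (2 * k + 1), if_pos (by omega)]

def B2Step (n : ℕ) : Language (Fin 1) := if n % 2 = 0 then {[0, 0]} else {[0]}

theorem B2_add_three (n : ℕ) : B2 (n + 3) = B2 (n + 2) * B2Step (n + 3) := by
  rw [B2.eq_4, B2Step, mul_ite]

theorem B2Step_mul_B2Step_succ (n : ℕ) : B2Step n * B2Step (n + 1) = {[0, 0, 0]} := by
  rcases Nat.mod_two_eq_zero_or_one n with hn | hn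
  · rw [B2Step, B2Step, if_pos hn, if_neg (by omega), singleton_mul_singleton]
    rfl
  · rw [B2Step, B2Step, if_neg (by omega), if_pos (by omega), singleton_mul_singleton]
    rfl

theorem B0_mul_singleton (j : ℕ) (hj : 1 ≤ j) : B0 j * {[0, 0, 0]} = B0 (j + 2) := by
  obtain ⟨k, rfl | rfl⟩ := Nat.even_or_odd' j
  · obtain ⟨k, rfl⟩ : ∃ i, k = i + 1 := ⟨k - 1, by omega⟩
    rw [show 2 * (k + 1) = 2 * k + 2 by ring, show 2 * k + 2 + 2 = 2 * (k + 1) + 2 by ring,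
      B0_two_mul_add_two (k + 1), show 2 * (k + 1) + 1 = 2 * k + 3 by ring,
      B0_two_mul_add_three, B0_two_mul_add_two, mul_right_comm]
  · exact (B0_two_mul_add_three k).symm

theorem B1_mul_singleton (j : ℕ) (hj : 1 ≤ j) : B1 j * {[0, 0, 0]} = B1 (j + 2) := by
  obtain ⟨k, rfl | rfl⟩ := Nat.even_or_odd' j
  · obtain ⟨k, rfl⟩ : ∃ i, k = i + 1 := ⟨k - 1, by omega⟩
    rw [show 2 * (k + 1) = 2 * k + 2 by ring, B1_two_mul_add_four]
  · rcases k with _ | k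
    · simp only [B1, insert_eq, add_mul, mul_add, singleton_mul_singleton]
      rfl
    · rw [show 2 * (k + 1) + 1 = 2 * k + 3 by ring, B1_two_mul_add_three,
        show 2 * k + 3 + 2 = 2 * (k + 1) + 3 by ring, B1_two_mul_add_three,
        show 2 * (k + 1) + 2 = 2 * k + 4 by ring, B1_two_mul_add_four, mul_right_comm]

theorem B2_mul_singleton (j : ℕ) (hj : 2 ≤ j) : B2 j * {[0, 0, 0]} = B2 (j + 2) := by
  obtain ⟨n, rfl⟩ : ∃ n, j = n + 2 := ⟨j - 2, by omega⟩
  rw [← B2Step_mul_B2Step_succ (n + 3), ← mul_assoc, ← B2_add_three, ← B2_add_three]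

/-- Lemma A.1: `B_0^j · {0³} = B_0^{j+2}` and `B_1^j · {0³} = B_1^{j+2}` for
`j ≥ 1`, and `B_2^j · {0³} = B_2^{j+2}` for `j ≥ 2`. -/
theorem stmt15 :
    (∀ j : ℕ, 1 ≤ j → B0 j * {[0, 0, 0]} = B0 (j + 2)) ∧
    (∀ j : ℕ, 1 ≤ j → B1 j * {[0, 0, 0]} = B1 (j + 2)) ∧
    (∀ j : ℕ, 2 ≤ j → B2 j * {[0, 0, 0]} = B2 (j + 2)) :=
  ⟨B0_mul_singleton, B1_mul_singleton, B2_mul_singleton⟩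
end

section
/- For all even j ≥ 2, B_1^j · {0} ⊆ B_2^j; for all j ≥ 2, B_1^j / 0 ⊆ B_2^j; and for all j ≥ 1, B_0^j · {0} ⊆ B_2^j. -/
theorem List.eq_of_length_eq_of_subsingleton {α : Type*} [Subsingleton α] {l₁ l₂ : List α}
    (h : l₁.length = l₂.length) : l₁ = l₂ :=
  List.ext_get h fun _ _ _ => Subsingleton.elim _ _

namespace Language

variable {α : Type*}

theorem exists_length_eq_of_mem_mul {L M : Language α} {w : List α} (hw : w ∈ L * M) :
    ∃ u ∈ L, ∃ v ∈ M, w.length = u.length + v.length := by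
  obtain ⟨u, hu, v, hv, rfl⟩ := mem_mul.1 hw
  exact ⟨u, hu, v, hv, List.length_append⟩

theorem mem_of_length_eq [Subsingleton α] {L : Language α} {u w : List α} (hu : u ∈ L)
    (h : w.length = u.length) : w ∈ L :=
  List.eq_of_length_eq_of_subsingleton h ▸ hu

theorem mem_mul_singleton_of_length_eq [Subsingleton α] {L : Language α} {u v w : List α}
    (hu : u ∈ L) (h : w.length = u.length + v.length) : w ∈ L * {v} :=
  mem_of_length_eq (append_mem_mul hu rfl) (by rw [h, List.length_append])

end Language

theorem length_mem_B0 {j : ℕ} (hj : 1 ≤ j) {w : List (Fin 1)} (hw : w ∈ B0 j) :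
    3 * (j - 1) / 2 ≤ w.length ∧ w.length + 1 ≤ 3 * j / 2 := by
  induction j using B0.induct generalizing w with
  | case1 => omega
  | case2 =>
    rw [show w = [] from hw]
    simp
  | case3 n hn ih =>
    rw [B0, if_pos hn] at hw
    obtain ⟨u, hu, v, hv, hlen⟩ := Language.exists_length_eq_of_mem_mul hw
    have := ih (by omega) hu
    rcases hv with rfl | rfl <;> simp only [List.length_cons, List.length_nil] at hlen <;> omega
  | case4 n hn ih =>
    rw [B0, if_neg hn] at hw
    obtain ⟨u, hu, v, rfl, hlen⟩ := Language.exists_length_eq_of_mem_mul hw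
    have := ih (by omega) hu
    simp only [List.length_cons, List.length_nil] at hlen
    omega

theorem length_mem_B1 {j : ℕ} (hj : 2 ≤ j) {w : List (Fin 1)} (hw : w ∈ B1 j) :
    3 * j / 2 ≤ w.length + 1 ∧ w.length ≤ (3 * j - 1) / 2 := by
  induction j using B1.induct generalizing w with
  | case1 | case2 => omega
  | case3 =>
    rw [show w = [0, 0] from hw]
    simp
  | case4 n hn ih =>
    rw [B1, if_pos hn] at hw
    obtain ⟨u, hu, v, rfl, hlen⟩ := Language.exists_length_eq_of_mem_mul hw
    have := ih (by omega) hu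
    simp only [List.length_cons, List.length_nil] at hlen
    omega
  | case5 n hn ih =>
    rw [B1, if_neg hn] at hw
    obtain ⟨u, hu, v, hv, hlen⟩ := Language.exists_length_eq_of_mem_mul hw
    have := ih (by omega) hu
    rcases hv with rfl | rfl <;> simp only [List.length_cons, List.length_nil] at hlen <;> omega

theorem mem_B2_of_length {j : ℕ} (hj : 1 ≤ j) {w : List (Fin 1)} (hlo : 3 * j / 2 ≤ w.length + 2)
    (hhi : w.length ≤ 3 * j / 2) : w ∈ B2 j := by
  induction j using B2.induct generalizing w with
  | case1 => omega
  | case2 =>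
    obtain h | h : w.length = 0 ∨ w.length = 1 := by omega
    exacts [Language.mem_of_length_eq (u := []) (Or.inl rfl) h,
      Language.mem_of_length_eq (u := [0]) (Or.inr rfl) h]
  | case3 =>
    obtain h | h | h : w.length = 1 ∨ w.length = 2 ∨ w.length = 3 := by omega
    exacts [Language.mem_of_length_eq (u := [0]) (Or.inl rfl) h,
      Language.mem_of_length_eq (u := [0, 0]) (Or.inr (Or.inl rfl)) h,
      Language.mem_of_length_eq (u := [0, 0, 0]) (Or.inr (Or.inr rfl)) h]
  | case4 n hn ih =>
    rw [B2, if_pos hn]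
    refine Language.mem_mul_singleton_of_length_eq (u := List.replicate (w.length - 2) 0)
      (ih (by omega) ?_ ?_) ?_ <;>
      simp only [List.length_replicate, List.length_cons, List.length_nil] <;> omega
  | case5 n hn ih =>
    rw [B2, if_neg hn]
    refine Language.mem_mul_singleton_of_length_eq (u := List.replicate (w.length - 1) 0)
      (ih (by omega) ?_ ?_) ?_ <;>
      simp only [List.length_replicate, List.length_cons, List.length_nil] <;> omega

/-- Lemma A.3: for even `j ≥ 2`, `B_1^j · {0} ⊆ B_2^j`; for `j ≥ 2`,
`B_1^j / 0 ⊆ B_2^j`; and for `j ≥ 1`, `B_0^j · {0} ⊆ B_2^j`. -/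
theorem stmt17 :
    (∀ j : ℕ, 2 ≤ j → Even j → B1 j * {[0]} ≤ B2 j) ∧
    (∀ j : ℕ, 2 ≤ j → {y : List (Fin 1) | y ++ [0] ∈ B1 j} ⊆ B2 j) ∧
    (∀ j : ℕ, 1 ≤ j → B0 j * {[0]} ≤ B2 j) := by
  refine ⟨fun j hj hev w hw => ?_, fun j hj y hy => ?_, fun j hj w hw => ?_⟩
  · obtain ⟨u, hu, _, rfl, hlen⟩ := Language.exists_length_eq_of_mem_mul hw
    rw [List.length_singleton] at hlen
    have := length_mem_B1 hj hu
    have := Nat.even_iff.1 hev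
    exact mem_B2_of_length (by omega) (by omega) (by omega)
  · have := length_mem_B1 hj hy
    rw [List.length_append, List.length_singleton] at this
    exact mem_B2_of_length (by omega) (by omega) (by omega)
  · obtain ⟨u, hu, _, rfl, hlen⟩ := Language.exists_length_eq_of_mem_mul hw
    rw [List.length_singleton] at hlen
    have := length_mem_B0 hj hu
    exact mem_B2_of_length hj (by omega) (by omega)
end

section
/- For every set I ⊆ ℕ, every j ≥ 1, and every n ∈ ℕ, the j-th A[I]-extension of the string 0^n belongs to B_{n mod 3}^j. (Since A[I] is an infinite subset of {0}*, every string 0^n has a unique j-th A[I]-extension for every j ≥ 1.) -/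
/-- `B_{m}^j` for `m ∈ {0,1,2}`. -/
def Bfam (m : ℕ) : ℕ → Language (Fin 1) :=
  if m = 0 then B0 else if m = 1 then B1 else B2

theorem shortlexLt_replicate_iff {σ : Type*} [LinearOrder σ] (x : σ) (a b : ℕ) :
    ShortlexLt (List.replicate a x) (List.replicate b x) ↔ a < b := by
  refine ⟨?_, fun h => Or.inl (by simpa using h)⟩
  rintro (h | ⟨hab, hlex⟩)
  · simpa using h
  · rw [List.length_replicate, List.length_replicate] at hab
    subst hab
    exact absurd hlex (List.lt_irrefl _)

theorem List.eq_replicate_length_of_subsingleton {α : Type*} [Subsingleton α] (w : List α)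
    (x : α) :
    w = List.replicate w.length x :=
  List.eq_replicate_iff.2 ⟨rfl, fun b _ => Subsingleton.elim b x⟩

theorem Language.replicate_mem_mul_of_le {α : Type*} {L L' : Language α} {x : α} {a b : ℕ}
    (hba : b ≤ a) (hL : List.replicate (a - b) x ∈ L) (hL' : List.replicate b x ∈ L') :
    List.replicate a x ∈ L * L' := by
  rw [← Nat.sub_add_cancel hba, List.replicate_add]
  exact Language.append_mem_mul hL hL'

theorem isNthExt_replicate_iff (S : Set ℕ) [DecidablePred (· ∈ S)] (j n M : ℕ) :
    IsNthExt {w | ∃ m ∈ S, w = List.replicate m (0 : Fin 1)} j (List.replicate n 0)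
        (List.replicate M 0) ↔
      n + M ∈ S ∧ Nat.count (· ∈ S) (n + M) = Nat.count (· ∈ S) n + (j - 1) := by
  have hmem (z : List (Fin 1)) :
      List.replicate n 0 ++ z ∈ {w | ∃ m ∈ S, w = List.replicate m (0 : Fin 1)} ↔
        n + z.length ∈ S := by
    conv_lhs => rw [z.eq_replicate_length_of_subsingleton 0, ← List.replicate_add]
    exact ⟨fun ⟨m, hm, h⟩ => by rwa [(List.replicate_inj.1 h).1], fun h => ⟨_, h, rfl⟩⟩
  have hset : {z | List.replicate n 0 ++ z ∈ {w | ∃ m ∈ S, w = List.replicate m (0 : Fin 1)} ∧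
        ShortlexLt z (List.replicate M 0)} =
      (fun m => List.replicate m (0 : Fin 1)) '' ↑({m ∈ Finset.range M | n + m ∈ S}) := by
    ext z
    rw [z.eq_replicate_length_of_subsingleton 0]
    simp [hmem, shortlexLt_replicate_iff, and_comm]
  have hinj : Function.Injective (fun m => List.replicate m (0 : Fin 1)) := fun a b h =>
    (List.replicate_inj.1 h).1
  rw [IsNthExt, hmem, List.length_replicate, hset, hinj.encard_image,
    Set.encard_coe_eq_coe_finsetCard, Nat.cast_inj,
    ← Nat.count_eq_card_filter_range (fun m => n + m ∈ S), Nat.count_add]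
  simp only [Nat.add_left_cancel_iff]

section Iext

variable {I : Set ℕ} {i : ℕ}

theorem three_mul_mem_Iext (I : Set ℕ) (i : ℕ) : 3 * i ∈ Iext I := Or.inl ⟨i, rfl⟩

theorem three_mul_add_one_mem_Iext_iff : 3 * i + 1 ∈ Iext I ↔ i ∈ I := by
  refine ⟨?_, fun h => Or.inr (Or.inl ⟨i, h, rfl⟩)⟩
  rintro (⟨k, hk⟩ | ⟨k, hk, he⟩ | ⟨k, -, hk⟩)
  · omega
  · rwa [show i = k by omega]
  · omega

theorem three_mul_add_two_mem_Iext_iff : 3 * i + 2 ∈ Iext I ↔ i ∉ I := by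
  refine ⟨?_, fun h => Or.inr (Or.inr ⟨i, h, rfl⟩)⟩
  rintro (⟨k, hk⟩ | ⟨k, -, hk⟩ | ⟨k, hk, he⟩)
  · omega
  · omega
  · rwa [show i = k by omega]

theorem infinite_Iext (I : Set ℕ) : (Iext I).Infinite :=
  Set.infinite_of_injective_forall_mem (fun _ _ h => by omega) (three_mul_mem_Iext I)

variable [DecidablePred (· ∈ Iext I)]

theorem count_Iext_three_mul_add_one :
    Nat.count (· ∈ Iext I) (3 * i + 1) = Nat.count (· ∈ Iext I) (3 * i) + 1 := by
  simp [Nat.count_succ, three_mul_mem_Iext]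

theorem count_Iext_three_mul_add_two_of_mem (hi : i ∈ I) :
    Nat.count (· ∈ Iext I) (3 * i + 2) = Nat.count (· ∈ Iext I) (3 * i + 1) + 1 := by
  rw [Nat.count_succ, if_pos (three_mul_add_one_mem_Iext_iff.2 hi)]

theorem count_Iext_three_mul_add_two_of_notMem (hi : i ∉ I) :
    Nat.count (· ∈ Iext I) (3 * i + 2) = Nat.count (· ∈ Iext I) (3 * i + 1) := by
  rw [Nat.count_succ, if_neg (mt three_mul_add_one_mem_Iext_iff.1 hi), add_zero]

theorem count_Iext_three_mul : Nat.count (· ∈ Iext I) (3 * i) = 2 * i := by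
  induction i with
  | zero => simp
  | succ i ih =>
    rw [show 3 * (i + 1) = 3 * i + 2 + 1 by ring, Nat.count_succ]
    by_cases hi : i ∈ I
    · rw [count_Iext_three_mul_add_two_of_mem hi, count_Iext_three_mul_add_one, ih,
        if_neg (mt three_mul_add_two_mem_Iext_iff.1 (not_not.2 hi))]
      ring
    · rw [count_Iext_three_mul_add_two_of_notMem hi, count_Iext_three_mul_add_one, ih,
        if_pos (three_mul_add_two_mem_Iext_iff.2 hi)]
      ring

theorem count_Iext_bounds_of_mem {p : ℕ} (hp : p ∈ Iext I) :
    2 * p ≤ 3 * Nat.count (· ∈ Iext I) p + 1 ∧ 3 * Nat.count (· ∈ Iext I) p ≤ 2 * p + 1 := by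
  rcases hp with ⟨i, rfl⟩ | ⟨i, hi, rfl⟩ | ⟨i, hi, rfl⟩
  · rw [count_Iext_three_mul]; omega
  · rw [count_Iext_three_mul_add_one, count_Iext_three_mul]; omega
  · rw [count_Iext_three_mul_add_two_of_notMem hi, count_Iext_three_mul_add_one,
      count_Iext_three_mul]; omega

end Iext

theorem replicate_mem_B0 {j M : ℕ} (h₁ : 2 * M + 2 ≤ 3 * j) (h₂ : 3 * j ≤ 2 * M + 4) :
    List.replicate M 0 ∈ B0 j := by
  induction j using B0.induct generalizing M with
  | case1 => omega
  | case2 => rw [show M = 0 by omega]; rfl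
  | case3 n hn ih =>
    rw [B0, if_pos hn]
    rcases (by omega : 1 ≤ M ∧ 3 * (n + 2) = 2 * M + 4 ∨ 2 ≤ M ∧ 3 * (n + 2) = 2 * M + 2)
      with ⟨hM, h⟩ | ⟨hM, h⟩
    · exact Language.replicate_mem_mul_of_le hM (ih (by omega) (by omega)) (Or.inl rfl)
    · exact Language.replicate_mem_mul_of_le hM (ih (by omega) (by omega)) (Or.inr rfl)
  | case4 n hn ih =>
    rw [B0, if_neg hn]
    exact Language.replicate_mem_mul_of_le (b := 3) (by omega) (ih (by omega) (by omega)) rfl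

theorem replicate_mem_B1 {j M : ℕ} (h₁ : 2 * M + 1 ≤ 3 * j) (h₂ : 3 * j ≤ 2 * M + 3) :
    List.replicate M 0 ∈ B1 j := by
  induction j using B1.induct generalizing M with
  | case1 => omega
  | case2 =>
    obtain rfl | rfl : M = 0 ∨ M = 1 := by omega
    exacts [Or.inl rfl, Or.inr rfl]
  | case3 => rw [show M = 2 by omega]; rfl
  | case4 n hn ih =>
    rw [B1, if_pos hn]
    exact Language.replicate_mem_mul_of_le (b := 3) (by omega) (ih (by omega) (by omega)) rfl
  | case5 n hn ih =>
    rw [B1, if_neg hn]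
    rcases (by omega : 1 ≤ M ∧ 3 * (n + 3) = 2 * M + 3 ∨ 2 ≤ M ∧ 3 * (n + 3) = 2 * M + 1)
      with ⟨hM, h⟩ | ⟨hM, h⟩
    · exact Language.replicate_mem_mul_of_le hM (ih (by omega) (by omega)) (Or.inl rfl)
    · exact Language.replicate_mem_mul_of_le hM (ih (by omega) (by omega)) (Or.inr rfl)

theorem replicate_mem_B2 {j M : ℕ} (hj : 1 ≤ j) (h₁ : 2 * M ≤ 3 * j) (h₂ : 3 * j ≤ 2 * M + 5) :
    List.replicate M 0 ∈ B2 j := by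
  induction j using B2.induct generalizing M with
  | case1 => omega
  | case2 =>
    obtain rfl | rfl : M = 0 ∨ M = 1 := by omega
    exacts [Or.inl rfl, Or.inr rfl]
  | case3 =>
    obtain rfl | rfl | rfl : M = 1 ∨ M = 2 ∨ M = 3 := by omega
    exacts [Or.inl rfl, Or.inr (Or.inl rfl), Or.inr (Or.inr rfl)]
  | case4 n hn ih =>
    rw [B2, if_pos hn]
    exact Language.replicate_mem_mul_of_le (b := 2) (by omega)
      (ih (by omega) (by omega) (by omega)) rfl
  | case5 n hn ih =>
    rw [B2, if_neg hn]
    exact Language.replicate_mem_mul_of_le (b := 1) (by omega)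
      (ih (by omega) (by omega) (by omega)) rfl

theorem replicate_sub_mem_Bfam {I : Set ℕ} [DecidablePred (· ∈ Iext I)] {j n p : ℕ} (hj : 1 ≤ j)
    (hp : p ∈ Iext I) (hnp : n ≤ p)
    (hcount : Nat.count (· ∈ Iext I) p = Nat.count (· ∈ Iext I) n + (j - 1)) :
    List.replicate (p - n) 0 ∈ Bfam (n % 3) j := by
  obtain ⟨h₁, h₂⟩ := count_Iext_bounds_of_mem hp
  obtain ⟨q, rfl | rfl | rfl⟩ : ∃ q, n = 3 * q ∨ n = 3 * q + 1 ∨ n = 3 * q + 2 := ⟨n / 3, by omega⟩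
  · rw [count_Iext_three_mul] at hcount
    rw [show 3 * q % 3 = 0 by omega]
    exact replicate_mem_B0 (by omega) (by omega)
  · rw [count_Iext_three_mul_add_one, count_Iext_three_mul] at hcount
    rw [show (3 * q + 1) % 3 = 1 by omega]
    exact replicate_mem_B1 (by omega) (by omega)
  · have hc : Nat.count (· ∈ Iext I) (3 * q + 2) = 2 * q + 1 ∨
        Nat.count (· ∈ Iext I) (3 * q + 2) = 2 * q + 2 := by
      by_cases hq : q ∈ I
      · rw [count_Iext_three_mul_add_two_of_mem hq, count_Iext_three_mul_add_one,
          count_Iext_three_mul]; omega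
      · rw [count_Iext_three_mul_add_two_of_notMem hq, count_Iext_three_mul_add_one,
          count_Iext_three_mul]; omega
    rw [show (3 * q + 2) % 3 = 2 by omega]
    exact replicate_mem_B2 hj (by omega) (by omega)

/-- Lemma 4.5 / (A.21): for every `I ⊆ ℕ`, `j ≥ 1` and `n ∈ ℕ`, the `j`-th
`A[I]`-extension of `0^n` exists and belongs to `B_{n mod 3}^j`. -/
theorem stmt19 (I : Set ℕ) (j n : ℕ) (hj : 1 ≤ j) :
    ∃ y : List (Fin 1), IsNthExt (AofI I) j (List.replicate n 0) y ∧ y ∈ Bfam (n % 3) j := by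
  classical
  set t := Nat.count (· ∈ Iext I) n + (j - 1)
  set p := Nat.nth (· ∈ Iext I) t
  have hp : p ∈ Iext I := Nat.nth_mem_of_infinite (p := (· ∈ Iext I)) (infinite_Iext I) t
  have hcount : Nat.count (· ∈ Iext I) p = t :=
    Nat.count_nth_of_infinite (p := (· ∈ Iext I)) (infinite_Iext I) t
  have hnp : n ≤ p := not_lt.1 fun hpn =>
    (Nat.count_strict_mono hp hpn).not_ge (hcount ▸ Nat.le_add_right _ _)
  refine ⟨List.replicate (p - n) 0, ?_, replicate_sub_mem_Bfam hj hp hnp hcount⟩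
  rw [AofI, isNthExt_replicate_iff, Nat.add_sub_cancel' hnp]
  exact ⟨hp, hcount⟩
end
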